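/- Let (B,+) be a finite abelian group and S ⊆ B^ℤ a Markov subgroup, i.e. a Markov subshift that is also a subgroup of B^ℤ under pointwise addition. Then the follower set F_S(0) = {c ∈ B : (0,c) ∈ S_2} and the predecessor set P_S(0) = {a ∈ B : (a,0) ∈ S_2} are subgroups of B, and for every b ∈ B appearing in S, F_S(b) is a coset of F_S(0) and P_S(b) is a coset of P_S(0); consequently S is left-regular and right-regular (all follower sets have the same size and all predecessor sets have the same size). -/
import Mathlib


/-- The Markov subshift of `B^ℤ` determined by the transition set `S2`. -/
def markovSet {B : Type*} (S2 : Set (B × B)) : Set (ℤ → B) :=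
  {s | ∀ z : ℤ, (s z, s (z + 1)) ∈ S2}

/-- For a Markov subgroup `S ⊆ B^ℤ` over a finite abelian group `B`,
the follower set `F(0)` and predecessor set `P(0)` of `0` are subgroups of `B`; the
follower/predecessor set of any symbol appearing in `S` is a coset thereof; hence
`S` is left- and right-regular. -/
theorem stmt14 {B : Type*} [AddCommGroup B] [Fintype B] (S2 : Set (B × B))
    (hS2 : ∀ p : B × B, p ∈ S2 ↔ ∃ s ∈ markovSet S2, (s 0, s 1) = p)
    (hzero : (0 : ℤ → B) ∈ markovSet S2)
    (hadd : ∀ s ∈ markovSet S2, ∀ t ∈ markovSet S2, s + t ∈ markovSet S2)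
    (hneg : ∀ s ∈ markovSet S2, -s ∈ markovSet S2) :
    (∃ H : AddSubgroup B, (H : Set B) = {c : B | ((0 : B), c) ∈ S2}) ∧
    (∃ H : AddSubgroup B, (H : Set B) = {a : B | (a, (0 : B)) ∈ S2}) ∧
    (∀ b : B, (∃ s ∈ markovSet S2, s 0 = b) →
      ∃ x : B, {c : B | (b, c) ∈ S2} = (fun y => x + y) '' {c : B | ((0 : B), c) ∈ S2}) ∧
    (∀ b : B, (∃ s ∈ markovSet S2, s 0 = b) →
      ∃ x : B, {a : B | (a, b) ∈ S2} = (fun y => x + y) '' {a : B | (a, (0 : B)) ∈ S2}) ∧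
    (∀ b b' : B, (∃ s ∈ markovSet S2, s 0 = b) → (∃ s ∈ markovSet S2, s 0 = b') →
      {c : B | (b, c) ∈ S2}.ncard = {c : B | (b', c) ∈ S2}.ncard) ∧
    (∀ b b' : B, (∃ s ∈ markovSet S2, s 0 = b) → (∃ s ∈ markovSet S2, s 0 = b') →
      {a : B | (a, b) ∈ S2}.ncard = {a : B | (a, b') ∈ S2}.ncard) := by

  -- S2 is closed under addition and negation, and contains (0,0)
  have h00 : ((0 : B), (0 : B)) ∈ S2 := (hS2 _).2 ⟨0, hzero, rfl⟩
  have hA : ∀ a c a' c' : B, (a, c) ∈ S2 → (a', c') ∈ S2 → (a + a', c + c') ∈ S2 := by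
    intro a c a' c' h h'
    obtain ⟨s, hs, hs2⟩ := (hS2 _).1 h
    obtain ⟨t, ht, ht2⟩ := (hS2 _).1 h'
    refine (hS2 _).2 ⟨s + t, hadd s hs t ht, ?_⟩
    simp only [Pi.add_apply, Prod.mk.injEq] at *
    exact ⟨by rw [hs2.1, ht2.1], by rw [hs2.2, ht2.2]⟩
  have hN : ∀ a c : B, (a, c) ∈ S2 → (-a, -c) ∈ S2 := by
    intro a c h
    obtain ⟨s, hs, hs2⟩ := (hS2 _).1 h
    refine (hS2 _).2 ⟨-s, hneg s hs, ?_⟩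
    simp only [Pi.neg_apply, Prod.mk.injEq] at *
    exact ⟨by rw [hs2.1], by rw [hs2.2]⟩
  -- follower coset claim
  have hF : ∀ b : B, (∃ s ∈ markovSet S2, s 0 = b) →
      ∃ x : B, {c : B | (b, c) ∈ S2} = (fun y => x + y) '' {c : B | ((0 : B), c) ∈ S2} := by
    intro b ⟨s, hs, hs0⟩
    have hbx : (b, s 1) ∈ S2 := (hS2 _).2 ⟨s, hs, by rw [hs0]⟩
    refine ⟨s 1, Set.ext fun c => ?_⟩
    constructor
    · intro hc
      refine ⟨c - s 1, ?_, by simp⟩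
      have := hA b c (-b) (-(s 1)) hc (hN _ _ hbx)
      simpa [sub_eq_add_neg, add_comm] using this
    · rintro ⟨y, hy, rfl⟩
      simpa using hA b (s 1) 0 y hbx hy
  have hP : ∀ b : B, (∃ s ∈ markovSet S2, s 0 = b) →
      ∃ x : B, {a : B | (a, b) ∈ S2} = (fun y => x + y) '' {a : B | (a, (0 : B)) ∈ S2} := by
    intro b ⟨s, hs, hs0⟩
    have hbx : (s (-1), b) ∈ S2 := by
      have := hs (-1)
      norm_num at this
      rwa [hs0] at this
    refine ⟨s (-1), Set.ext fun a => ?_⟩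
    constructor
    · intro ha
      refine ⟨a - s (-1), ?_, by simp⟩
      have := hA a b (-(s (-1))) (-b) ha (hN _ _ hbx)
      simpa [sub_eq_add_neg, add_comm] using this
    · rintro ⟨y, hy, rfl⟩
      simpa using hA (s (-1)) b y 0 hbx hy
  refine ⟨⟨⟨⟨⟨{c : B | ((0 : B), c) ∈ S2},
      fun h h' => by simpa using hA _ _ _ _ h h'⟩, h00⟩,
      fun h => by simpa using hN _ _ h⟩, rfl⟩,
    ⟨⟨⟨⟨{a : B | (a, (0 : B)) ∈ S2},
      fun h h' => by simpa using hA _ _ _ _ h h'⟩, h00⟩,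
      fun h => by simpa using hN _ _ h⟩, rfl⟩,
    hF, hP, ?_, ?_⟩
  · intro b b' hb hb'
    obtain ⟨x, hx⟩ := hF b hb
    obtain ⟨x', hx'⟩ := hF b' hb'
    rw [hx, hx', Set.ncard_image_of_injective _ (add_right_injective x),
      Set.ncard_image_of_injective _ (add_right_injective x')]
  · intro b b' hb hb'
    obtain ⟨x, hx⟩ := hP b hb
    obtain ⟨x', hx'⟩ := hP b' hb'
    rw [hx, hx', Set.ncard_image_of_injective _ (add_right_injective x),
      Set.ncard_image_of_injective _ (add_right_injective x')]
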